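/- arXiv:1207.5188 — 2 statements merged into one kernel-verified Lean document; each statement's English description precedes it below -/
import Mathlib

section
/- Let f : M → M be a map on a metric space, ζ ∈ M a non-periodic point such that f is continuous at every point of the forward orbit of ζ. Let (U_n) be a sequence of subsets of M with ζ ∈ U_n for all n, such that for every δ > 0 there is N with U_n ⊆ B_δ(ζ) for all n ≥ N. Define R_n = min { j ≥ 1 : ∃ x ∈ U_n, f^j(x) ∈ U_n } (allowing R_n = ∞). Then R_n → ∞ as n → ∞. -/
open Filter Metric Set Topology

/-!
If `f^[m] ζ ≠ ζ` and `f^[m]` is continuous at `ζ`, then every small enough neighbourhood `s` of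
`ζ` is mapped by `f^[m]` off itself. Intersecting finitely many such conditions, the sets `U n`,
being eventually inside any neighbourhood of `ζ`, eventually return to themselves under none of
`f, …, f^[K]`, so their first return time eventually exceeds `K`.
-/

/-- A set that never returns to itself has first return time `sInf ∅ = ⊤`. -/
noncomputable def firstReturnTime {α : Type*} (f : α → α) (s : Set α) : ℕ∞ :=
  sInf {j : ℕ∞ | ∃ m : ℕ, j = (m : ℕ∞) ∧ 1 ≤ m ∧ ∃ x ∈ s, f^[m] x ∈ s}

theorem natCast_lt_firstReturnTime {α : Type*} {f : α → α} {s : Set α} {K : ℕ}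
    (h : ∀ m ∈ Finset.Icc 1 K, MapsTo f^[m] s sᶜ) : (K : ℕ∞) < firstReturnTime f s := by
  refine (ENat.natCast_lt_natCast.2 K.lt_succ_self).trans_le (le_sInf ?_)
  rintro _ ⟨m, rfl, hm, x, hx, hfx⟩
  have hKm : K < m := by
    by_contra! hmK
    exact h m (Finset.mem_Icc.2 ⟨hm, hmK⟩) hx hfx
  exact_mod_cast hKm

theorem continuousAt_iterate_of_continuousAt_orbit {X : Type*} [TopologicalSpace X]
    {f : X → X} {x : X} {n : ℕ} (hf : ∀ k < n, ContinuousAt f (f^[k] x)) :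
    ContinuousAt f^[n] x := by
  induction n with
  | zero => exact continuousAt_id
  | succ n ih =>
    rw [Function.iterate_succ']
    exact (hf n n.lt_succ_self).comp (ih fun k hk => hf k (hk.trans n.lt_succ_self))

/-- Separate `x` and `g x` by disjoint neighbourhoods `A` and `B`; then `A ∩ g⁻¹' B` works. -/
theorem eventually_smallSets_mapsTo_compl {X : Type*} [TopologicalSpace X] [T2Space X]
    {g : X → X} {x : X} (hg : ContinuousAt g x) (hx : g x ≠ x) :
    ∀ᶠ s in (𝓝 x).smallSets, MapsTo g s sᶜ := by
  obtain ⟨A, hA, B, hB, hAB⟩ := Filter.disjoint_iff.1 (disjoint_nhds_nhds.2 hx.symm)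
  refine eventually_smallSets.2 ⟨A ∩ g ⁻¹' B, inter_mem hA (hg hB), fun s hs y hy hgy => ?_⟩
  exact hAB.ne_of_mem (hs hgy).1 (hs hy).2 rfl

theorem firstReturnTime_tendsto_top_general
    {M : Type*} [MetricSpace M] (f : M → M) (ζ : M)
    (hper : ∀ j : ℕ, 1 ≤ j → f^[j] ζ ≠ ζ)
    (hcont : ∀ k : ℕ, ContinuousAt f (f^[k] ζ))
    (U : ℕ → Set M)
    (hshrink : ∀ δ : ℝ, 0 < δ → ∃ N : ℕ, ∀ n ≥ N, U n ⊆ Metric.ball ζ δ) :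
    Tendsto (fun n : ℕ =>
        sInf {j : ℕ∞ | ∃ m : ℕ, j = (m : ℕ∞) ∧ 1 ≤ m ∧ ∃ x ∈ U n, f^[m] x ∈ U n})
      atTop (nhds ⊤) := by
  have hU : Tendsto U atTop (𝓝 ζ).smallSets :=
    nhds_basis_ball.smallSets.tendsto_right_iff.2 fun δ hδ =>
      eventually_atTop.2 (hshrink δ hδ)
  rw [ENat.tendsto_nhds_top_iff_natCast_lt]
  intro K
  have hsep : ∀ᶠ s in (𝓝 ζ).smallSets, ∀ m ∈ Finset.Icc 1 K, MapsTo f^[m] s sᶜ :=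
    (Finset.eventually_all _).2 fun m hm =>
      eventually_smallSets_mapsTo_compl
        (continuousAt_iterate_of_continuousAt_orbit fun k _ => hcont k)
        (hper m (Finset.mem_Icc.1 hm).1)
  filter_upwards [hU hsep] with n hn
  exact natCast_lt_firstReturnTime hn

/-- If ζ is non-periodic, f is continuous along the orbit of ζ, and the
sets U_n (containing ζ) shrink to ζ, then the first return time
R_n = min { j ≥ 1 : ∃ x ∈ U_n, f^j(x) ∈ U_n } (valued in ℕ∞) tends to infinity. -/
theorem firstReturnTime_tendsto_top
    {M : Type*} [MetricSpace M] (f : M → M) (ζ : M)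
    (hper : ∀ j : ℕ, 1 ≤ j → f^[j] ζ ≠ ζ)
    (hcont : ∀ k : ℕ, ContinuousAt f (f^[k] ζ))
    (U : ℕ → Set M) (hζU : ∀ n, ζ ∈ U n)
    (hshrink : ∀ δ : ℝ, 0 < δ → ∃ N : ℕ, ∀ n ≥ N, U n ⊆ Metric.ball ζ δ) :
    Tendsto (fun n : ℕ =>
        sInf {j : ℕ∞ | ∃ m : ℕ, j = (m : ℕ∞) ∧ 1 ≤ m ∧ ∃ x ∈ U n, f^[m] x ∈ U n})
      atTop (nhds ⊤) :=
  firstReturnTime_tendsto_top_general f ζ hper hcont U hshrink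
end

section
/- Let (a_n) be a sequence of nonnegative reals, (R_n) a sequence in ℕ with R_n → ∞, (k_n) a sequence of positive integers with k_n → ∞, τ > 0, C > 0, and suppose n·a_n → τ. Suppose p_{n,j} ≤ a_n² + C·a_n·j^{-2} for all n, j ≥ 1, where p_{n,j} ≥ 0, and p_{n,j} = 0 for 1 ≤ j < R_n. Then n · Σ_{j=1}^{⌊n/k_n⌋} p_{n,j} → 0 as n → ∞. -/
/-!
The terms with `j < R_n` vanish, so the sum runs over `R_n ≤ j ≤ ⌊n/k_n⌋`. There the bound
`p_{n,j} ≤ a_n² + C a_n / j²` contributes at most `⌊n/k_n⌋ a_n²` from the first term and, since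
`∑_{j ≥ R} j⁻² ≤ 2/R`, at most `2 C a_n / R_n` from the second. After multiplying by `n`, this is
`(n a_n)² / k_n + 2 C (n a_n) / R_n`, which tends to `τ² · 0 + 2 C τ · 0 = 0`.
-/

open Filter Finset

theorem sum_Icc_inv_sq_le {R : ℕ} (hR : 0 < R) (M : ℕ) :
    ∑ j ∈ Icc R M, ((j : ℝ) ^ 2)⁻¹ ≤ 2 / R := by
  obtain ⟨r, rfl⟩ := Nat.exists_eq_add_one_of_ne_zero hR.ne'
  have hsub : Icc (r + 1) M ⊆ Ioo r (M + 1) := fun j hj => by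
    rw [mem_Icc] at hj
    rw [mem_Ioo]
    omega
  calc ∑ j ∈ Icc (r + 1) M, ((j : ℝ) ^ 2)⁻¹
      ≤ ∑ j ∈ Ioo r (M + 1), ((j : ℝ) ^ 2)⁻¹ :=
        sum_le_sum_of_subset_of_nonneg hsub fun _ _ _ => by positivity
    _ ≤ 2 / ((r + 1 : ℕ) : ℝ) := by
        simpa only [Nat.cast_add, Nat.cast_one] using sum_Ioo_inv_sq_le (α := ℝ) r (M + 1)

theorem sum_Icc_le_of_eq_zero_of_le_add_div_sq {p : ℕ → ℝ} {A B : ℝ} {R : ℕ}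
    (hA : 0 ≤ A) (hB : 0 ≤ B) (hR : 0 < R)
    (hbd : ∀ j, 1 ≤ j → p j ≤ A + B / (j : ℝ) ^ 2)
    (hzero : ∀ j, 1 ≤ j → j < R → p j = 0) (M : ℕ) :
    ∑ j ∈ Icc 1 M, p j ≤ M * A + 2 * B / R := by
  have hsupport : ∑ j ∈ Icc R M, p j = ∑ j ∈ Icc 1 M, p j := by
    refine sum_subset (Icc_subset_Icc_left hR) fun j hj hjR => hzero j ?_ ?_
    all_goals simp only [mem_Icc] at hj hjR; omega
  have hcard : ((Icc R M).card : ℝ) ≤ M := by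
    rw [Nat.card_Icc]
    exact_mod_cast (by omega : M + 1 - R ≤ M)
  calc ∑ j ∈ Icc 1 M, p j
      = ∑ j ∈ Icc R M, p j := hsupport.symm
    _ ≤ ∑ j ∈ Icc R M, (A + B * ((j : ℝ) ^ 2)⁻¹) :=
        sum_le_sum fun j hj => by
          simpa only [div_eq_mul_inv] using hbd j (hR.trans_le (mem_Icc.mp hj).1)
    _ = (Icc R M).card * A + B * ∑ j ∈ Icc R M, ((j : ℝ) ^ 2)⁻¹ := by
        rw [sum_add_distrib, sum_const, nsmul_eq_mul, mul_sum]
    _ ≤ M * A + B * (2 / R) := by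
        gcongr
        exact sum_Icc_inv_sq_le hR M
    _ = M * A + 2 * B / R := by ring

theorem Dprime_sum_tendsto_zero_general
    (a : ℕ → ℝ) (ha : ∀ n, 0 ≤ a n)
    (R : ℕ → ℕ) (hR : Tendsto R atTop atTop)
    (k : ℕ → ℕ) (hk : Tendsto k atTop atTop)
    (τ C : ℝ) (hC : 0 < C)
    (hna : Tendsto (fun n : ℕ => (n : ℝ) * a n) atTop (nhds τ))
    (p : ℕ → ℕ → ℝ) (hp0 : ∀ n j, 0 ≤ p n j)
    (hbd : ∀ n j, 1 ≤ j → p n j ≤ a n ^ 2 + C * a n / (j : ℝ) ^ 2)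
    (hzero : ∀ n j, 1 ≤ j → j < R n → p n j = 0) :
    Tendsto (fun n : ℕ => (n : ℝ) * ∑ j ∈ Finset.Icc 1 (n / k n), p n j)
      atTop (nhds 0) := by
  have hmajorant : Tendsto (fun n : ℕ => ((n : ℝ) * a n) ^ 2 / k n
      + 2 * C * ((n : ℝ) * a n) / R n) atTop (nhds 0) := by
    simpa using ((hna.pow 2).div_atTop (tendsto_natCast_atTop_atTop.comp hk)).add
      ((hna.const_mul (2 * C)).div_atTop (tendsto_natCast_atTop_atTop.comp hR))
  refine squeeze_zero' (Eventually.of_forall fun n =>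
    mul_nonneg n.cast_nonneg (sum_nonneg fun j _ => hp0 n j)) ?_ hmajorant
  filter_upwards [hR.eventually_gt_atTop 0] with n hRn
  calc (n : ℝ) * ∑ j ∈ Icc 1 (n / k n), p n j
      ≤ n * (((n / k n : ℕ) : ℝ) * a n ^ 2 + 2 * (C * a n) / R n) := by
        gcongr
        exact sum_Icc_le_of_eq_zero_of_le_add_div_sq (sq_nonneg _)
          (mul_nonneg hC.le (ha n)) hRn (hbd n) (hzero n) _
    _ ≤ n * ((n : ℝ) / k n * a n ^ 2 + 2 * (C * a n) / R n) := by
        gcongr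
        exact Nat.cast_div_le
    _ = ((n : ℝ) * a n) ^ 2 / k n + 2 * C * ((n : ℝ) * a n) / R n := by ring

/-- quantitative core of condition D′(u_n). -/
theorem Dprime_sum_tendsto_zero
    (a : ℕ → ℝ) (ha : ∀ n, 0 ≤ a n)
    (R : ℕ → ℕ) (hR : Tendsto R atTop atTop)
    (k : ℕ → ℕ) (hkpos : ∀ n, 0 < k n) (hk : Tendsto k atTop atTop)
    (τ C : ℝ) (hτ : 0 < τ) (hC : 0 < C)
    (hna : Tendsto (fun n : ℕ => (n : ℝ) * a n) atTop (nhds τ))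
    (p : ℕ → ℕ → ℝ) (hp0 : ∀ n j, 0 ≤ p n j)
    (hbd : ∀ n j, 1 ≤ j → p n j ≤ a n ^ 2 + C * a n / (j : ℝ) ^ 2)
    (hzero : ∀ n j, 1 ≤ j → j < R n → p n j = 0) :
    Tendsto (fun n : ℕ => (n : ℝ) * ∑ j ∈ Finset.Icc 1 (n / k n), p n j)
      atTop (nhds 0) :=
  Dprime_sum_tendsto_zero_general a ha R hR k hk τ C hC hna p hp0 hbd hzero
end
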